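/- arXiv:2111.02832 — 5 statements merged into one kernel-verified Lean document; each statement's English description precedes it below -/
import Mathlib

section
/- The integer 33 cannot be written as a sum of distinct triangular-type binomial values C(j+2,2) for j ≥ 0, but every integer n > 33 can be written as a sum of distinct values C(j+2,2) with j ≥ 0. -/
set_option maxRecDepth 100000 in
lemma no33 : ∀ F ∈ (Finset.range 7).powerset, ∑ j ∈ F, (j + 2).choose 2 ≠ 33 := by decide

set_option maxRecDepth 1000000 in
lemma base : ∀ n < 85, 34 ≤ n → ∃ F ∈ (Finset.range 8).powerset, ∑ j ∈ F, (j + 2).choose 2 = n := by decide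

lemma tmono {a b : ℕ} (h : a ≤ b) : (a + 2).choose 2 ≤ (b + 2).choose 2 :=
  Nat.choose_le_choose 2 (by omega)

lemma t2 (k : ℕ) : 2 * (k + 2).choose 2 = (k + 1) * (k + 2) := by
  rw [Nat.choose_two_right]
  have e : k + 2 - 1 = k + 1 := rfl
  rw [e]
  have h : 2 ∣ (k + 2) * (k + 1) := by
    simpa [Nat.mul_comm] using (Nat.even_mul_succ_self (k + 1)).two_dvd
  rw [Nat.mul_div_cancel' h]
  ring

lemma hdiff (k : ℕ) : (k + 3).choose 2 = (k + 2).choose 2 + (k + 2) := by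
  have a := t2 k
  have b := t2 (k + 1)
  have e : k + 1 + 2 = k + 3 := rfl
  rw [e] at b
  have c : (k + 2) * (k + 3) = (k + 1) * (k + 2) + 2 * (k + 2) := by ring
  linarith

theorem lambda_triangular_j0 :
    (¬ ∃ F : Finset ℕ, ∑ j ∈ F, (j + 2).choose 2 = 33) ∧
    (∀ n : ℕ, 33 < n → ∃ F : Finset ℕ, ∑ j ∈ F, (j + 2).choose 2 = n) := by
  constructor
  · rintro ⟨F, hF⟩
    have hsub : F ⊆ Finset.range 7 := by
      intro j hj
      have h1 : (j + 2).choose 2 ≤ 33 :=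
        hF ▸ Finset.single_le_sum (f := fun j => (j + 2).choose 2) (fun i _ => Nat.zero_le _) hj
      rw [Finset.mem_range]
      by_contra h
      have h2 := tmono (show 7 ≤ j by omega)
      have h9 : (7 + 2).choose 2 = 36 := by rfl
      omega
    exact no33 F (Finset.mem_powerset.mpr hsub) hF
  · intro n
    induction n using Nat.strong_induction_on with
    | _ n ih =>
      intro hn
      by_cases hsmall : n < 85
      · obtain ⟨F, _, hF⟩ := base n hsmall (by omega)
        exact ⟨F, hF⟩
      · push_neg at hsmall
        set P : ℕ → Prop := fun k => (k + 2).choose 2 ≤ n - 34 with hP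
        have hP8 : P 8 := by simp [hP, Nat.choose]; omega
        set k := Nat.findGreatest P n with hk
        have hk8 : 8 ≤ k := Nat.le_findGreatest (by omega) hP8
        have hkspec : P k := Nat.findGreatest_spec (m := 8) (by omega) hP8
        have htk : (k + 2).choose 2 ≤ n - 34 := hkspec
        have hkn : k + 1 ≤ n := by
          have h1 : k + 1 ≤ (k + 2).choose 2 := by nlinarith [t2 k]
          omega
        have hmax : ¬ P (k + 1) := Nat.findGreatest_is_greatest (by omega) hkn
        have htk1 : n - 34 < (k + 3).choose 2 := by
          have h' : ¬ ((k + 3).choose 2 ≤ n - 34) := hmax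
          omega
        have hd := hdiff k
        set m := n - (k + 2).choose 2 with hm
        have hm34 : 34 ≤ m := by omega
        have hmlt : m < n := by
          have h1 : 1 ≤ (k + 2).choose 2 := by nlinarith [t2 k]
          omega
        have hmk : m ≤ k + 35 := by omega
        obtain ⟨F, hF⟩ := ih m hmlt (by omega)
        have hlt : ∀ j ∈ F, j < k := by
          intro j hj
          have h1 : (j + 2).choose 2 ≤ m :=
            hF ▸ Finset.single_le_sum (f := fun j => (j + 2).choose 2) (fun i _ => Nat.zero_le _) hj
          by_contra h
          have h2 : (k + 2).choose 2 ≤ (j + 2).choose 2 := tmono (by omega)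
          have h3 : k + 35 < (k + 2).choose 2 := by nlinarith [t2 k]
          omega
        have hknotin : k ∉ F := fun h => absurd (hlt k h) (lt_irrefl k)
        refine ⟨insert k F, ?_⟩
        rw [Finset.sum_insert hknotin, hF]
        omega
end

section
/- The integer 50 cannot be written as a sum of distinct values C(j+2,2) for j ≥ 1, but every integer n > 50 can be. -/
private lemma f_succ (j : ℕ) : (j + 3).choose 2 = (j + 2).choose 2 + (j + 2) := by
  show (j + 2 + 1).choose (1 + 1) = _
  rw [Nat.choose_succ_succ, Nat.choose_one_right, Nat.add_comm]

private lemma f_strictMono : StrictMono (fun j : ℕ => (j + 2).choose 2) := by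
  apply strictMono_nat_of_lt_succ
  intro j
  show (j + 2).choose 2 < (j + 1 + 2).choose 2
  have : j + 1 + 2 = j + 3 := by ring
  rw [this, f_succ]
  omega

private lemma aux53 : ∀ j : ℕ, 10 ≤ j → j + 53 ≤ (j + 2).choose 2 := by
  intro j hj
  induction j, hj using Nat.le_induction with
  | base => decide
  | succ j hj ih =>
      have : j + 1 + 2 = j + 3 := by ring
      rw [this, f_succ]
      omega

private lemma rep_all : ∀ n : ℕ, 51 ≤ n → ∃ F : Finset ℕ,
    (∀ j ∈ F, 1 ≤ j) ∧ ∑ j ∈ F, (j + 2).choose 2 = n := by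
  intro n
  induction n using Nat.strong_induction_on with
  | _ n ih =>
    intro hn
    rcases lt_or_ge n 117 with hB | hB
    · interval_cases n
      · exact ⟨({2, 8} : Finset ℕ), by decide, by decide⟩
      · exact ⟨({1, 5, 6} : Finset ℕ), by decide, by decide⟩
      · exact ⟨({3, 4, 6} : Finset ℕ), by decide, by decide⟩
      · exact ⟨({1, 2, 8} : Finset ℕ), by decide, by decide⟩
      · exact ⟨({9} : Finset ℕ), by decide, by decide⟩
      · exact ⟨({1, 3, 4, 6} : Finset ℕ), by decide, by decide⟩
      · exact ⟨({5, 7} : Finset ℕ), by decide, by decide⟩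
      · exact ⟨({1, 9} : Finset ℕ), by decide, by decide⟩
      · exact ⟨({3, 5, 6} : Finset ℕ), by decide, by decide⟩
      · exact ⟨({4, 8} : Finset ℕ), by decide, by decide⟩
      · exact ⟨({2, 9} : Finset ℕ), by decide, by decide⟩
      · exact ⟨({1, 3, 5, 6} : Finset ℕ), by decide, by decide⟩
      · exact ⟨({1, 4, 8} : Finset ℕ), by decide, by decide⟩
      · exact ⟨({6, 7} : Finset ℕ), by decide, by decide⟩
      · exact ⟨({3, 9} : Finset ℕ), by decide, by decide⟩
      · exact ⟨({10} : Finset ℕ), by decide, by decide⟩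
      · exact ⟨({1, 6, 7} : Finset ℕ), by decide, by decide⟩
      · exact ⟨({1, 3, 9} : Finset ℕ), by decide, by decide⟩
      · exact ⟨({1, 10} : Finset ℕ), by decide, by decide⟩
      · exact ⟨({4, 9} : Finset ℕ), by decide, by decide⟩
      · exact ⟨({2, 3, 9} : Finset ℕ), by decide, by decide⟩
      · exact ⟨({2, 10} : Finset ℕ), by decide, by decide⟩
      · exact ⟨({6, 8} : Finset ℕ), by decide, by decide⟩
      · exact ⟨({3, 6, 7} : Finset ℕ), by decide, by decide⟩
      · exact ⟨({1, 2, 10} : Finset ℕ), by decide, by decide⟩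
      · exact ⟨({3, 10} : Finset ℕ), by decide, by decide⟩
      · exact ⟨({1, 3, 6, 7} : Finset ℕ), by decide, by decide⟩
      · exact ⟨({11} : Finset ℕ), by decide, by decide⟩
      · exact ⟨({1, 3, 10} : Finset ℕ), by decide, by decide⟩
      · exact ⟨({3, 4, 9} : Finset ℕ), by decide, by decide⟩
      · exact ⟨({1, 11} : Finset ℕ), by decide, by decide⟩
      · exact ⟨({2, 3, 10} : Finset ℕ), by decide, by decide⟩
      · exact ⟨({6, 9} : Finset ℕ), by decide, by decide⟩
      · exact ⟨({2, 11} : Finset ℕ), by decide, by decide⟩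
      · exact ⟨({5, 6, 7} : Finset ℕ), by decide, by decide⟩
      · exact ⟨({1, 6, 9} : Finset ℕ), by decide, by decide⟩
      · exact ⟨({5, 10} : Finset ℕ), by decide, by decide⟩
      · exact ⟨({3, 11} : Finset ℕ), by decide, by decide⟩
      · exact ⟨({2, 6, 9} : Finset ℕ), by decide, by decide⟩
      · exact ⟨({1, 5, 10} : Finset ℕ), by decide, by decide⟩
      · exact ⟨({12} : Finset ℕ), by decide, by decide⟩
      · exact ⟨({1, 2, 6, 9} : Finset ℕ), by decide, by decide⟩
      · exact ⟨({4, 11} : Finset ℕ), by decide, by decide⟩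
      · exact ⟨({1, 12} : Finset ℕ), by decide, by decide⟩
      · exact ⟨({3, 5, 6, 7} : Finset ℕ), by decide, by decide⟩
      · exact ⟨({1, 4, 11} : Finset ℕ), by decide, by decide⟩
      · exact ⟨({2, 12} : Finset ℕ), by decide, by decide⟩
      · exact ⟨({4, 6, 9} : Finset ℕ), by decide, by decide⟩
      · exact ⟨({5, 11} : Finset ℕ), by decide, by decide⟩
      · exact ⟨({8, 9} : Finset ℕ), by decide, by decide⟩
      · exact ⟨({3, 12} : Finset ℕ), by decide, by decide⟩
      · exact ⟨({7, 10} : Finset ℕ), by decide, by decide⟩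
      · exact ⟨({1, 8, 9} : Finset ℕ), by decide, by decide⟩
      · exact ⟨({1, 3, 12} : Finset ℕ), by decide, by decide⟩
      · exact ⟨({13} : Finset ℕ), by decide, by decide⟩
      · exact ⟨({4, 12} : Finset ℕ), by decide, by decide⟩
      · exact ⟨({2, 3, 12} : Finset ℕ), by decide, by decide⟩
      · exact ⟨({1, 13} : Finset ℕ), by decide, by decide⟩
      · exact ⟨({1, 4, 12} : Finset ℕ), by decide, by decide⟩
      · exact ⟨({3, 8, 9} : Finset ℕ), by decide, by decide⟩
      · exact ⟨({2, 13} : Finset ℕ), by decide, by decide⟩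
      · exact ⟨({5, 12} : Finset ℕ), by decide, by decide⟩
      · exact ⟨({1, 3, 8, 9} : Finset ℕ), by decide, by decide⟩
      · exact ⟨({7, 11} : Finset ℕ), by decide, by decide⟩
      · exact ⟨({3, 13} : Finset ℕ), by decide, by decide⟩
      · exact ⟨({3, 4, 12} : Finset ℕ), by decide, by decide⟩
    · have hle_f : ∀ k : ℕ, k ≤ (k + 2).choose 2 := by
        intro k
        induction k with
        | zero => decide
        | succ k ihk =>
            have h3 : k + 1 + 2 = k + 3 := by ring
            rw [h3, f_succ]
            omega
      have hex : ∃ j, n - 51 < (j + 3).choose 2 := by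
        refine ⟨n, ?_⟩
        have := hle_f (n + 1)
        rw [show n + 1 + 2 = n + 3 by ring] at this
        omega
      set j := Nat.find hex with hj
      have h1 : n - 51 < (j + 3).choose 2 := Nat.find_spec hex
      have hj10 : 10 ≤ j := by
        by_contra h
        push_neg at h
        have hle : (j + 3).choose 2 ≤ (12).choose 2 :=
          Nat.choose_le_choose 2 (by omega)
        have : (12).choose 2 = 66 := by decide
        omega
      have h2 : (j + 2).choose 2 ≤ n - 51 := by
        have hmin := Nat.find_min hex (show j - 1 < j by omega)
        push_neg at hmin
        have : j - 1 + 3 = j + 2 := by omega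
        rwa [this] at hmin
      set t := (j + 2).choose 2 with ht
      have htn : t ≤ n - 51 := h2
      have ht3 : 3 ≤ t := by
        have : (3 : ℕ).choose 2 ≤ (j + 2).choose 2 := Nat.choose_le_choose 2 (by omega)
        simpa using this
      set m := n - t with hm
      have hm51 : 51 ≤ m := by omega
      have hmn : m < n := by omega
      obtain ⟨F', hF1, hF2⟩ := ih m hmn hm51
      have hsucc : (j + 3).choose 2 = t + (j + 2) := f_succ j
      have hmt : m < t := by
        have h53 := aux53 j hj10
        omega
      have hlt : ∀ i ∈ F', i < j := by
        intro i hi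
        have hle : (i + 2).choose 2 ≤ m := by
          rw [← hF2]
          exact Finset.single_le_sum (f := fun i => (i + 2).choose 2)
            (fun i _ => Nat.zero_le _) hi
        by_contra h
        push_neg at h
        have := f_strictMono.monotone h
        omega
      have hjF : j ∉ F' := fun h => absurd (hlt j h) (lt_irrefl j)
      refine ⟨insert j F', ?_, ?_⟩
      · intro i hi
        rcases Finset.mem_insert.mp hi with rfl | hi
        · omega
        · exact hF1 i hi
      · rw [Finset.sum_insert hjF, hF2]
        omega

set_option maxRecDepth 100000 in
theorem lambda_triangular_j1 :
    (¬ ∃ F : Finset ℕ, (∀ j ∈ F, 1 ≤ j) ∧ ∑ j ∈ F, (j + 2).choose 2 = 50) ∧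
    (∀ n : ℕ, 50 < n → ∃ F : Finset ℕ,
        (∀ j ∈ F, 1 ≤ j) ∧ ∑ j ∈ F, (j + 2).choose 2 = n) := by
  constructor
  · rintro ⟨F, hF1, hF2⟩
    have hsub : F ⊆ Finset.Icc 1 8 := by
      intro i hi
      have hle : (i + 2).choose 2 ≤ 50 := by
        rw [← hF2]
        exact Finset.single_le_sum (f := fun i => (i + 2).choose 2)
          (fun i _ => Nat.zero_le _) hi
      have h1 := hF1 i hi
      rw [Finset.mem_Icc]
      refine ⟨h1, ?_⟩
      by_contra h
      push_neg at h
      have : (11 : ℕ).choose 2 ≤ (i + 2).choose 2 := Nat.choose_le_choose 2 (by omega)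
      have h55 : (11 : ℕ).choose 2 = 55 := by decide
      omega
    have key : ∀ G ∈ (Finset.Icc 1 8).powerset, ∑ j ∈ G, (j + 2).choose 2 ≠ 50 := by
      decide
    exact key F (Finset.mem_powerset.mpr hsub) hF2
  · intro n hn
    exact rep_all n (by omega)
end

section
/- The integer 12758 cannot be written as a sum of distinct positive perfect cubes, but every integer n > 12758 can be written as a sum of distinct positive perfect cubes. -/
def gstep (a j : ℕ) : ℕ := a ||| a <<< j ^ 3

def cubeList (m : ℕ) : List ℕ := (List.range' 1 m)

set_option exponentiation.threshold 20000 in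
set_option maxRecDepth 10000 in
lemma mask23_bit : (List.foldl gstep 1 (cubeList 23)).testBit 12758 = false := by decide

set_option exponentiation.threshold 20000 in
set_option maxRecDepth 10000 in
lemma mask20_check :
    ((List.foldl gstep 1 (cubeList 20)) >>> 12759) % 2 ^ 9261 = 2 ^ 9261 - 1 := by decide

lemma mem_cubeList {m j : ℕ} : j ∈ cubeList m ↔ 1 ≤ j ∧ j ≤ m := by
  simp only [cubeList, List.mem_range']
  constructor
  · rintro ⟨i, hi, rfl⟩; omega
  · rintro ⟨h1, h2⟩; exact ⟨j - 1, by omega, by omega⟩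

/-- Soundness: every subset sum of cubes of elements of `l` has its bit set. -/
lemma dp_sound : ∀ (l : List ℕ) (a t : ℕ) (F : Finset ℕ), (∀ j ∈ F, j ∈ l) →
    a.testBit t = true →
    (List.foldl gstep a l).testBit (t + ∑ j ∈ F, j ^ 3) = true := by
  intro l
  induction l with
  | nil =>
    intro a t F hF ha
    have : F = ∅ := Finset.eq_empty_of_forall_notMem (fun x hx => by simpa using hF x hx)
    simpa [this] using ha
  | cons j l ih =>
    intro a t F hF ha
    by_cases hj : j ∈ F
    · have hF' : ∀ k ∈ F.erase j, k ∈ l := by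
        intro k hk
        have hne := Finset.ne_of_mem_erase hk
        have := hF k (Finset.mem_of_mem_erase hk)
        simpa [hne] using this
      have ha' : (gstep a j).testBit (t + j ^ 3) = true := by
        unfold gstep
        rw [Nat.testBit_or, Nat.testBit_shiftLeft]
        have h' : t + j ^ 3 - j ^ 3 = t := by omega
        simp [h', ha]
      have := ih (gstep a j) (t + j ^ 3) (F.erase j) hF' ha'
      have hsum : j ^ 3 + ∑ k ∈ F.erase j, k ^ 3 = ∑ k ∈ F, k ^ 3 :=
        Finset.add_sum_erase F (fun k => k ^ 3) hj
      simpa [List.foldl, ← hsum, Nat.add_assoc] using this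
    · have hF' : ∀ k ∈ F, k ∈ l := by
        intro k hk
        have := hF k hk
        rcases List.mem_cons.1 this with h | h
        · exact absurd (h ▸ hk) hj
        · exact h
      have ha' : (gstep a j).testBit t = true := by
        unfold gstep
        rw [Nat.testBit_or, ha]
        simp
      simpa [List.foldl] using ih (gstep a j) t F hF' ha'

/-- Completeness: every set bit of the DP mask comes from a subset sum. -/
lemma dp_complete : ∀ (l : List ℕ) (a s : ℕ), l.Nodup →
    (List.foldl gstep a l).testBit s = true →
    ∃ t : ℕ, ∃ F : Finset ℕ, (∀ j ∈ F, j ∈ l) ∧ a.testBit t = true ∧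
      t + ∑ j ∈ F, j ^ 3 = s := by
  intro l
  induction l with
  | nil =>
    intro a s _ h
    exact ⟨s, ∅, by simp, by simpa using h, by simp⟩
  | cons j l ih =>
    intro a s hnd h
    have hjl : j ∉ l := (List.nodup_cons.1 hnd).1
    obtain ⟨t, F, hF, ha, hsum⟩ := ih (gstep a j) s (List.nodup_cons.1 hnd).2 (by simpa using h)
    unfold gstep at ha
    rw [Nat.testBit_or, Nat.testBit_shiftLeft] at ha
    rcases Bool.or_eq_true_iff.1 ha with h1 | h1
    · exact ⟨t, F, fun k hk => List.mem_cons_of_mem j (hF k hk), h1, hsum⟩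
    · obtain ⟨hle, hbit⟩ := Bool.and_eq_true_iff.1 h1
      have hle' : j ^ 3 ≤ t := of_decide_eq_true hle
      have hjF : j ∉ F := fun hc => hjl (hF j hc)
      refine ⟨t - j ^ 3, insert j F, ?_, hbit, ?_⟩
      · intro k hk
        rcases Finset.mem_insert.1 hk with h | h
        · simp [h]
        · exact List.mem_cons_of_mem j (hF k h)
      · rw [Finset.sum_insert hjF]
        omega

set_option exponentiation.threshold 20000 in
set_option maxRecDepth 10000 in
lemma base_case : ∀ n : ℕ, 12759 ≤ n → n < 22020 →
    ∃ F : Finset ℕ, (∀ j ∈ F, 1 ≤ j ∧ j ≤ 20) ∧ ∑ j ∈ F, j ^ 3 = n := by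
  intro n h1 h2
  have hbit : (List.foldl gstep 1 (cubeList 20)).testBit n = true := by
    have hc := congrArg (fun x => x.testBit (n - 12759)) mask20_check
    simp only [Nat.testBit_mod_two_pow, Nat.testBit_shiftRight,
      Nat.testBit_two_pow_sub_one] at hc
    have hlt : n - 12759 < 9261 := by omega
    have h12 : 12759 + (n - 12759) = n := by omega
    simpa [hlt, h12] using hc
  obtain ⟨t, F, hF, h1t, hsum⟩ :=
    dp_complete (cubeList 20) 1 n (by decide) hbit
  have ht : t = 0 := Nat.testBit_one_eq_true_iff_self_eq_zero.1 h1t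
  exact ⟨F, fun j hj => mem_cubeList.1 (hF j hj), by omega⟩

lemma step_case : ∀ k : ℕ, ∀ n : ℕ, 12759 ≤ n → n < 12759 + (21 + k) ^ 3 →
    ∃ F : Finset ℕ, (∀ j ∈ F, 1 ≤ j ∧ j ≤ 20 + k) ∧ ∑ j ∈ F, j ^ 3 = n := by
  intro k
  induction k with
  | zero =>
    intro n h1 h2
    exact base_case n h1 (by norm_num at h2; omega)
  | succ k ih =>
    intro n h1 h2
    by_cases hn : n < 12759 + (21 + k) ^ 3
    · obtain ⟨F, hF, hs⟩ := ih n h1 hn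
      exact ⟨F, fun j hj => ⟨(hF j hj).1, le_trans (hF j hj).2 (by omega)⟩, hs⟩
    · push_neg at hn
      obtain ⟨A, hA⟩ : ∃ A, A = (21 + k) ^ 3 := ⟨_, rfl⟩
      obtain ⟨B, hB⟩ : ∃ B, B = (21 + (k + 1)) ^ 3 := ⟨_, rfl⟩
      rw [← hB] at h2
      rw [← hA] at hn
      have hcube : B ≤ 2 * A := by
        have e1 : B = k ^ 3 + 66 * k ^ 2 + 1452 * k + 10648 := by rw [hB]; ring
        have e2 : 2 * A = 2 * k ^ 3 + 126 * k ^ 2 + 2646 * k + 18522 := by rw [hA]; ring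
        rw [e1, e2]
        have h3 : 0 ≤ k ^ 3 := Nat.zero_le _
        have h4 : 0 ≤ k ^ 2 := Nat.zero_le _
        omega
      obtain ⟨F, hF, hs⟩ := ih (n - A) (by omega) (by rw [← hA]; omega)
      have hnotmem : (21 + k) ∉ F := fun hc => by have := (hF _ hc).2; omega
      refine ⟨insert (21 + k) F, ?_, ?_⟩
      · intro j hj
        rcases Finset.mem_insert.1 hj with h | h
        · omega
        · have := hF j h; omega
      · rw [Finset.sum_insert hnotmem, hs, ← hA]
        omega

theorem graham_cubes :
    (¬ ∃ F : Finset ℕ, (∀ j ∈ F, 1 ≤ j) ∧ ∑ j ∈ F, j ^ 3 = 12758) ∧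
    (∀ n : ℕ, 12758 < n → ∃ F : Finset ℕ,
        (∀ j ∈ F, 1 ≤ j) ∧ ∑ j ∈ F, j ^ 3 = n) := by
  constructor
  · rintro ⟨F, hF, hs⟩
    have hmem : ∀ j ∈ F, j ∈ cubeList 23 := by
      intro j hj
      have hle : j ^ 3 ≤ 12758 :=
        hs ▸ Finset.single_le_sum (f := fun i => i ^ 3) (fun i _ => Nat.zero_le _) hj
      have hj23 : j ≤ 23 := by
        by_contra hgt
        push_neg at hgt
        have h24 : (24 : ℕ) ^ 3 ≤ j ^ 3 := Nat.pow_le_pow_left (by omega) 3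
        norm_num at h24
        omega
      exact mem_cubeList.2 ⟨hF j hj, hj23⟩
    have hbit := dp_sound (cubeList 23) 1 0 F hmem (by decide)
    rw [hs] at hbit
    simp only [Nat.zero_add] at hbit
    rw [mask23_bit] at hbit
    exact Bool.false_ne_true hbit
  · intro n hn
    have hlt : n < 12759 + (21 + n) ^ 3 := by
      have h1 : 21 + n ≤ (21 + n) ^ 3 := Nat.le_self_pow (by norm_num) _
      omega
    obtain ⟨F, hF, hs⟩ := step_case n n (by omega) hlt
    exact ⟨F, fun j hj => (hF j hj).1, hs⟩
end

section
/- For every positive integer N₀ and strictly increasing p : ℕ → ℕ with p(j) ≥ 1: if there exists N₁ ≥ 3 such that for all N ≥ N₁ we have p(N) − p(N−3) > N₀ and 2·p(N−3) > p(N+1), and every integer y with N₀ < y ≤ p(N₁+1) is a sum of distinct values of p, then every integer y > N₀ is a sum of distinct values of p. -/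
/-- `y` is a sum of distinct values of `p`. -/
def IsSumDistinct (p : ℕ → ℕ) (y : ℕ) : Prop :=
  ∃ F : Finset ℕ, ∑ j ∈ F, p j = y

theorem dangelo_scheme (N₀ : ℕ) (hN₀ : 1 ≤ N₀) (p : ℕ → ℕ)
    (hmono : StrictMono p) (hpos : ∀ j, 1 ≤ p j)
    (h : ∃ N₁ : ℕ, 3 ≤ N₁ ∧
        (∀ N : ℕ, N₁ ≤ N → N₀ < p N - p (N - 3) ∧ p (N + 1) < 2 * p (N - 3)) ∧
        (∀ y : ℕ, N₀ < y → y ≤ p (N₁ + 1) → IsSumDistinct p y)) :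
    ∀ y : ℕ, N₀ < y → IsSumDistinct p y := by
  obtain ⟨N₁, hN₁3, hgap, hbase⟩ := h
  intro y
  induction y using Nat.strong_induction_on with
  | _ y ih =>
    intro hy
    by_cases hle : y ≤ p (N₁ + 1)
    · exact hbase y hy hle
    push_neg at hle
    have hex : ∃ N, y ≤ p (N + 1) := ⟨y, le_trans (Nat.le_succ y) hmono.le_apply⟩
    set N := Nat.find hex with hNdef
    have hN1 : y ≤ p (N + 1) := Nat.find_spec hex
    have hNge : N₁ + 1 ≤ N := by
      by_contra hc
      push_neg at hc
      exact absurd (le_trans hN1 (hmono.monotone (by omega))) (not_le.mpr hle)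
    have hpNlt : p N < y := by
      have := Nat.find_min hex (show N - 1 < N by omega)
      have hNe : N - 1 + 1 = N := by omega
      rw [hNe] at this
      omega
    obtain ⟨hg1, hg2⟩ := hgap N (by omega)
    set M := N - 3 with hMdef
    have hMN : p M < p N := hmono (by omega)
    have hposM := hpos M
    have hy' : N₀ < y - p M := by omega
    have hy'lt : y - p M < y := by omega
    obtain ⟨F, hF⟩ := ih (y - p M) hy'lt hy'
    have hMnot : M ∉ F := by
      intro hMF
      have : p M ≤ y - p M :=
        hF ▸ Finset.single_le_sum (fun i _ => Nat.zero_le _) hMF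
      omega
    exact ⟨insert M F, by rw [Finset.sum_insert hMnot, hF]; omega⟩
end

section
/- The integer 120838 cannot be written as a sum of distinct values C(j+5,5) for j ≥ 0. -/
/-- bitmask of reachable subset sums -/
def reachSet : List ℕ → ℕ
  | [] => 1
  | v :: l => reachSet l ||| (reachSet l <<< v)

lemma reach_bit : ∀ {l t : List ℕ}, t.Sublist l → (reachSet l).testBit t.sum = true := by
  intro l t h
  induction h with
  | slnil => decide
  | cons v h ih =>
      rw [reachSet, Nat.testBit_or, ih, Bool.true_or]
  | @cons_cons t' l' v h ih =>
      rw [reachSet, Nat.testBit_or, List.sum_cons, Nat.testBit_shiftLeft]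
      have h2 : v + t'.sum - v = t'.sum := by omega
      rw [h2, ih]
      simp [Nat.le_add_right]

lemma sum_range_eq_list (g : ℕ → ℕ) (n : ℕ) :
    ∑ j ∈ Finset.range n, g j = ((List.range n).map g).sum := by
  induction n with
  | zero => simp
  | succ n ih => rw [Finset.sum_range_succ, List.range_succ]; simp [ih]

lemma filter_map_sum (p : ℕ → Bool) (v : ℕ → ℕ) (l : List ℕ) :
    ((l.filter p).map v).sum = (l.map (fun j => if p j then v j else 0)).sum := by
  induction l with
  | nil => simp
  | cons a l ih =>
      by_cases h : p a <;> simp [List.filter_cons, h, ih]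

theorem lambda_choose5_j0 :
    ¬ ∃ F : Finset ℕ, ∑ j ∈ F, (j + 5).choose 5 = 120838 := by
  rintro ⟨F, hF⟩
  set v : ℕ → ℕ := fun j => (j + 5).choose 5 with hv
  -- F ⊆ range 25
  have hsub : F ⊆ Finset.range 25 := by
    intro j hj
    rw [Finset.mem_range]
    by_contra h
    push_neg at h
    have h1 : (30).choose 5 ≤ v j := Nat.choose_le_choose 5 (by omega)
    have h2 : v j ≤ ∑ j ∈ F, v j := Finset.single_le_sum (fun i _ => Nat.zero_le _) hj
    rw [hF] at h2
    have h3 : (30).choose 5 = 142506 := by decide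
    rw [h3] at h1
    omega
  -- turn into a sublist sum
  have hFeq : F = (Finset.range 25).filter (· ∈ F) := by
    ext x
    simp only [Finset.mem_filter]
    exact ⟨fun h => ⟨hsub h, h⟩, fun h => h.2⟩
  have hsum : (((List.range 25).filter (fun j => decide (j ∈ F))).map v).sum = 120838 := by
    rw [filter_map_sum, ← sum_range_eq_list, ← Finset.sum_filter]
    simp only [decide_eq_true_eq]
    rw [← hFeq, hF]
  have hbit := reach_bit (t := ((List.range 25).filter (fun j => decide (j ∈ F))).map v)
    (l := (List.range 25).map v) ((List.filter_sublist (l := List.range 25)).map v)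
  rw [hsum] at hbit
  have : (reachSet ((List.range 25).map v)).testBit 120838 = false := by
    rw [hv]; decide
  rw [this] at hbit
  exact Bool.false_ne_true hbit
end
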